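/- arXiv:1404.7637 — 3 statements merged into one kernel-verified Lean document; each statement's English description precedes it below -/
import Mathlib

section
/- If ρ is a symmetric probability measure on ℝ whose support contains at least five points, and all moments up to order 8 are finite, then (μ_4 - σ^4)(μ_8 - μ_4^2) ≠ (μ_6 - σ^2 μ_4)^2, where σ^2, μ_4, μ_6, μ_8 denote the second, fourth, sixth and eighth moments of ρ. -/
/-!
Writing `Y = Z²`, the two sides differ by `Var[Y] * Var[Y²] - cov[Y, Y²]²`, the determinant of the
covariance matrix of `(Y, Y²)`. If it vanished, this singular covariance matrix would give a
nontrivial relation `a Y + b Y² = c` almost surely, hence, by continuity, at every point of the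
support. But `a x² + b x⁴ - c` is a nonzero polynomial of degree at most four, so it has at most
four roots.
-/

open MeasureTheory

/-- The (topological) support of a measure: points all of whose neighbourhoods have
positive measure. -/
def measSupport (ρ : Measure ℝ) : Set ℝ := {x | ∀ U ∈ nhds x, 0 < ρ U}

open ProbabilityTheory

section
variable {Ω : Type*} {mΩ : MeasurableSpace Ω} {μ : Measure Ω} [IsFiniteMeasure μ]
  {X Y : Ω → ℝ}

lemma exists_ae_linear_relation_of_covariance_sq_eq (hX : MemLp X 2 μ) (hY : MemLp Y 2 μ)
    (h : Var[X; μ] * Var[Y; μ] = cov[X, Y; μ] ^ 2) :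
    ∃ a b c : ℝ, (a ≠ 0 ∨ b ≠ 0) ∧ ∀ᵐ ω ∂μ, a * X ω + b * Y ω = c := by
  by_cases hX0 : Var[X; μ] = 0
  · refine ⟨1, 0, μ[X], Or.inl one_ne_zero, ?_⟩
    filter_upwards [ae_eq_integral_of_variance_eq_zero hX hX0] with ω hω
    simp [hω]
  -- `(-cov[X, Y], Var[X])` spans the kernel of the singular covariance matrix of `(X, Y)`.
  set a := -cov[X, Y; μ]
  set b := Var[X; μ]
  have hvar : Var[fun ω ↦ a * X ω + b * Y ω; μ] = 0 := by
    rw [variance_fun_add (hX.const_mul a) (hY.const_mul b), variance_const_mul,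
      variance_const_mul, covariance_const_mul_left, covariance_const_mul_right]
    linear_combination b * h
  exact ⟨a, b, _, Or.inr hX0,
    ae_eq_integral_of_variance_eq_zero ((hX.const_mul a).add (hY.const_mul b)) hvar⟩

end

section
variable {ρ : Measure ℝ}

lemma eq_of_ae_eq_of_mem_measSupport {f g : ℝ → ℝ} (hf : Continuous f) (hg : Continuous g)
    (h : f =ᵐ[ρ] g) {x : ℝ} (hx : x ∈ measSupport ρ) : f x = g x := by
  by_contra hne
  exact (hx _ ((isOpen_ne_fun hf hg).mem_nhds hne)).ne' (ae_iff.mp h)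

lemma memLp_two_pow_of_integrable_pow {n : ℕ} (h : Integrable (fun x : ℝ => x ^ (2 * n)) ρ) :
    MemLp (fun x : ℝ => x ^ n) 2 ρ :=
  (memLp_two_iff_integrable_sq (by fun_prop)).2 (by simpa only [← pow_mul, mul_comm] using h)

variable [IsProbabilityMeasure ρ]

lemma covariance_pow_pow {m n : ℕ} (hm : MemLp (fun x : ℝ => x ^ m) 2 ρ)
    (hn : MemLp (fun x : ℝ => x ^ n) 2 ρ) :
    cov[fun x => x ^ m, fun x => x ^ n; ρ] =
      ∫ x, x ^ (m + n) ∂ρ - (∫ x, x ^ m ∂ρ) * ∫ x, x ^ n ∂ρ := by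
  simp [covariance_eq_sub hm hn, pow_add]

lemma variance_pow {n : ℕ} (hn : MemLp (fun x : ℝ => x ^ n) 2 ρ) :
    Var[fun x => x ^ n; ρ] = ∫ x, x ^ (2 * n) ∂ρ - (∫ x, x ^ n ∂ρ) ^ 2 := by
  rw [← covariance_self hn.aemeasurable, covariance_pow_pow hn hn, two_mul, sq]

end

open Polynomial in
lemma card_le_four_of_forall_biquadratic_eq {a b c : ℝ} (hab : a ≠ 0 ∨ b ≠ 0) {s : Finset ℝ}
    (hs : ∀ x ∈ s, a * x ^ 2 + b * x ^ 4 = c) : s.card ≤ 4 := by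
  set p : ℝ[X] := C a * X ^ 2 + C b * X ^ 4 - C c
  have hp : p ≠ 0 := by
    intro h0
    have h2 := congrArg (coeff · 2) h0
    have h4 := congrArg (coeff · 4) h0
    simp [p] at h2 h4
    tauto
  have hdeg : p.natDegree ≤ 4 := by simp only [p]; compute_degree
  refine (card_le_degree_of_subset_roots fun x hx => ?_).trans hdeg
  rw [mem_roots hp]
  simp [p, hs x hx]

theorem covariance_matrix_invertible_general
    (ρ : Measure ℝ) [IsProbabilityMeasure ρ]
    (hsupp : ∃ s : Finset ℝ, s.card = 5 ∧ ↑s ⊆ measSupport ρ)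
    (h4 : Integrable (fun x : ℝ => x ^ 4) ρ)
    (h8 : Integrable (fun x : ℝ => x ^ 8) ρ)
    (σ2 μ4 μ6 μ8 : ℝ)
    (hσ2 : σ2 = ∫ x, x ^ 2 ∂ρ) (hμ4 : μ4 = ∫ x, x ^ 4 ∂ρ)
    (hμ6 : μ6 = ∫ x, x ^ 6 ∂ρ) (hμ8 : μ8 = ∫ x, x ^ 8 ∂ρ) :
    (μ4 - σ2 ^ 2) * (μ8 - μ4 ^ 2) ≠ (μ6 - σ2 * μ4) ^ 2 := by
  intro heq
  obtain ⟨s, hcard, hs⟩ := hsupp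
  have hX := memLp_two_pow_of_integrable_pow (n := 2) h4
  have hY := memLp_two_pow_of_integrable_pow (n := 4) h8
  have hgram : Var[fun x => x ^ 2; ρ] * Var[fun x => x ^ 4; ρ] =
      cov[fun x => x ^ 2, fun x => x ^ 4; ρ] ^ 2 := by
    rw [variance_pow hX, variance_pow hY, covariance_pow_pow hX hY, ← hσ2, ← hμ4, ← hμ8]
    exact hμ6 ▸ heq
  obtain ⟨a, b, c, hab, hrel⟩ := exists_ae_linear_relation_of_covariance_sq_eq hX hY hgram
  have hle := card_le_four_of_forall_biquadratic_eq hab fun x hx =>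
    eq_of_ae_eq_of_mem_measSupport (by fun_prop) continuous_const hrel (hs hx)
  omega

theorem covariance_matrix_invertible
    (ρ : Measure ℝ) [IsProbabilityMeasure ρ]
    (hsymm : Measure.map (fun x : ℝ => -x) ρ = ρ)
    (hsupp : ∃ s : Finset ℝ, s.card = 5 ∧ ↑s ⊆ measSupport ρ)
    (h2 : Integrable (fun x : ℝ => x ^ 2) ρ)
    (h4 : Integrable (fun x : ℝ => x ^ 4) ρ)
    (h6 : Integrable (fun x : ℝ => x ^ 6) ρ)
    (h8 : Integrable (fun x : ℝ => x ^ 8) ρ)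
    (σ2 μ4 μ6 μ8 : ℝ)
    (hσ2 : σ2 = ∫ x, x ^ 2 ∂ρ) (hμ4 : μ4 = ∫ x, x ^ 4 ∂ρ)
    (hμ6 : μ6 = ∫ x, x ^ 6 ∂ρ) (hμ8 : μ8 = ∫ x, x ^ 8 ∂ρ) :
    (μ4 - σ2 ^ 2) * (μ8 - μ4 ^ 2) ≠ (μ6 - σ2 * μ4) ^ 2 :=
  covariance_matrix_invertible_general ρ hsupp h4 h8 σ2 μ4 μ6 μ8 hσ2 hμ4 hμ6 hμ8
end

section
/- Let A > 0, let q be a positive definite quadratic form on ℝ^2, and let (α, β, γ) ∈ ℕ^3 satisfy α/3 + β + γ > 2. Then x^α y^β z^γ / (A x^6 + q(y, z)) tends to 0 as (x, y, z) → (0, 0, 0) along (x,y,z) ≠ (0,0,0). -/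
open Filter Topology

/-!
Bound the denominator below by `G = A x⁶ + m (y² + z²)` with `m > 0` (positive definiteness of
`q`). Then `A x⁶`, `m y²`, `m z²` are all at most `G`, so the sixth power of the numerator is
`O(G ^ (α + 3β + 3γ))`, and the sixth power of the quotient is `O(G ^ (α + 3β + 3γ - 6))`. The
hypothesis on the exponents says exactly that `α + 3β + 3γ - 6` is positive, and `G → 0`.
Working with sixth powers keeps every exponent a natural number.
-/

lemma exists_pos_mul_sq_add_sq_le {a b c : ℝ} (ha : 0 < a) (hdet : 0 < a * c - b ^ 2) :
    ∃ m > 0, ∀ y z : ℝ, m * (y ^ 2 + z ^ 2) ≤ a * y ^ 2 + 2 * b * y * z + c * z ^ 2 := by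
  have hc : 0 < c := by nlinarith [sq_nonneg b]
  -- `det / tr` is at most the smaller eigenvalue, because the larger one is at most `tr`.
  refine ⟨(a * c - b ^ 2) / (a + c), by positivity, fun y z => ?_⟩
  set m := (a * c - b ^ 2) / (a + c)
  have hm : m * (a + c) = a * c - b ^ 2 := div_mul_cancel₀ _ (by positivity)
  have ham : 0 < a - m := by nlinarith [sq_nonneg a, sq_nonneg b]
  nlinarith [sq_nonneg ((a - m) * y + b * z), sq_nonneg (m * z), mul_pos ham (mul_pos ham ham)]

lemma tendsto_zero_of_tendsto_pow {ι 𝕜 : Type*} [NormedDivisionRing 𝕜] {l : Filter ι}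
    {f : ι → 𝕜} {n : ℕ} (h : Tendsto (fun i => f i ^ n) l (𝓝 0)) :
    Tendsto f l (𝓝 0) := by
  rw [Metric.tendsto_nhds] at h ⊢
  intro ε hε
  filter_upwards [h (ε ^ n) (by positivity)] with i hi
  rw [dist_zero_right, norm_pow] at hi
  rw [dist_zero_right]
  exact lt_of_pow_lt_pow_left₀ n hε.le hi

def weightedGauge (A m : ℝ) (p : ℝ × ℝ × ℝ) : ℝ :=
  A * p.1 ^ 6 + m * (p.2.1 ^ 2 + p.2.2 ^ 2)

section weightedGauge

variable {A m : ℝ}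

lemma tendsto_weightedGauge_nhds_zero :
    Tendsto (weightedGauge A m) (𝓝 (0, 0, 0)) (𝓝 0) := by
  have h : Continuous (weightedGauge A m) := by unfold weightedGauge; fun_prop
  simpa [weightedGauge] using h.tendsto (0, 0, 0)

lemma weightedGauge_pos (hA : 0 < A) (hm : 0 < m) {p : ℝ × ℝ × ℝ} (hp : p ≠ (0, 0, 0)) :
    0 < weightedGauge A m p := by
  obtain ⟨x, y, z⟩ := p
  unfold weightedGauge
  by_cases hx : x = 0
  · have hyz : y ≠ 0 ∨ z ≠ 0 := by
      by_contra! h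
      exact hp (by simp [hx, h.1, h.2])
    have : 0 < y ^ 2 + z ^ 2 := by rcases hyz with h | h <;> positivity
    simpa [hx] using mul_pos hm this
  · positivity

lemma pow_mul_monomial_pow_six_le_weightedGauge_pow (hA : 0 ≤ A) (hm : 0 ≤ m) (α β γ : ℕ)
    (x y z : ℝ) :
    A ^ α * m ^ (3 * β + 3 * γ) * (x ^ α * y ^ β * z ^ γ) ^ 6 ≤
      weightedGauge A m (x, y, z) ^ (α + 3 * β + 3 * γ) := by
  have hx6 : 0 ≤ A * x ^ 6 := by positivity
  have hy2 : 0 ≤ m * y ^ 2 := by positivity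
  have hz2 : 0 ≤ m * z ^ 2 := by positivity
  have hx : A * x ^ 6 ≤ weightedGauge A m (x, y, z) := by unfold weightedGauge; linarith
  have hy : m * y ^ 2 ≤ weightedGauge A m (x, y, z) := by unfold weightedGauge; linarith
  have hz : m * z ^ 2 ≤ weightedGauge A m (x, y, z) := by unfold weightedGauge; linarith
  have hG : 0 ≤ weightedGauge A m (x, y, z) := hx6.trans hx
  calc A ^ α * m ^ (3 * β + 3 * γ) * (x ^ α * y ^ β * z ^ γ) ^ 6
      = (A * x ^ 6) ^ α * (m * y ^ 2) ^ (3 * β) * (m * z ^ 2) ^ (3 * γ) := by ring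
    _ ≤ _ := by rw [pow_add, pow_add]; gcongr

lemma monomial_div_pow_six_le (hA : 0 < A) (hm : 0 < m) {α β γ : ℕ}
    (hk : 6 ≤ α + 3 * β + 3 * γ) {x y z Q : ℝ} (hp : (x, y, z) ≠ (0, 0, 0))
    (hQ : weightedGauge A m (x, y, z) ≤ Q) :
    (x ^ α * y ^ β * z ^ γ / Q) ^ 6 ≤
      weightedGauge A m (x, y, z) ^ (α + 3 * β + 3 * γ - 6) / (A ^ α * m ^ (3 * β + 3 * γ)) := by
  have hG := weightedGauge_pos hA hm hp
  calc (x ^ α * y ^ β * z ^ γ / Q) ^ 6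
      ≤ (x ^ α * y ^ β * z ^ γ) ^ 6 / weightedGauge A m (x, y, z) ^ 6 := by
        rw [div_pow]; gcongr
    _ ≤ _ := by
        rw [div_le_div_iff₀ (by positivity) (by positivity), ← pow_add, Nat.sub_add_cancel hk,
          mul_comm]
        exact pow_mul_monomial_pow_six_le_weightedGauge_pow hA.le hm.le α β γ x y z

end weightedGauge

theorem monomial_negligible (A : ℝ) (hA : 0 < A) (q : ℝ → ℝ → ℝ) (a b c : ℝ)
    (hq : ∀ y z, q y z = a * y ^ 2 + 2 * b * y * z + c * z ^ 2)
    (ha : 0 < a) (hdet : 0 < a * c - b ^ 2)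
    (α β γ : ℕ) (hexp : (α : ℚ) / 3 + β + γ > 2) :
    Tendsto (fun p : ℝ × ℝ × ℝ =>
        p.1 ^ α * p.2.1 ^ β * p.2.2 ^ γ / (A * p.1 ^ 6 + q p.2.1 p.2.2))
      (nhdsWithin ((0, 0, 0) : ℝ × ℝ × ℝ) {p | p ≠ (0, 0, 0)}) (nhds 0) := by
  obtain ⟨m, hm, hqm⟩ := exists_pos_mul_sq_add_sq_le ha hdet
  have hk : 6 < α + 3 * β + 3 * γ := by
    have : (6 : ℚ) < α + 3 * β + 3 * γ := by linarith
    exact_mod_cast this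
  have hbound : Tendsto (fun p => weightedGauge A m p ^ (α + 3 * β + 3 * γ - 6) /
      (A ^ α * m ^ (3 * β + 3 * γ))) (𝓝[{p | p ≠ (0, 0, 0)}] (0, 0, 0)) (𝓝 0) := by
    have h := ((tendsto_weightedGauge_nhds_zero (A := A) (m := m)).pow
      (α + 3 * β + 3 * γ - 6)).div_const (A ^ α * m ^ (3 * β + 3 * γ))
    rw [zero_pow (by omega), zero_div] at h
    exact h.mono_left nhdsWithin_le_nhds
  refine tendsto_zero_of_tendsto_pow (n := 6) (squeeze_zero' ?_ ?_ hbound)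
  · exact Eventually.of_forall fun p => by positivity
  · filter_upwards [self_mem_nhdsWithin] with ⟨x, y, z⟩ hp
    refine monomial_div_pow_six_le hA hm hk.le hp ?_
    simp only [weightedGauge, hq]
    linarith [hqm y z]
end

section
/- Let f : ℝ → [0, ∞) be a bounded measurable function with ∫ f = 1 (a probability density). Then for every p with 1 < p < 5/4, the integral over ℝ^3 of f(x)^p f(y)^p f(z)^p / |(x+y+z)(x−y)(y−z)(z−x)|^{p−1} dx dy dz is finite. -/
/-!
By AM-GM, `|abcd| ^ (-β) ≤ ∑ |aᵢ| ^ (-4β)`, so with `g = f ^ p` and `α = 4 (p - 1) < 1` the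
integrand is dominated by four terms `g x * g y * g z / |v - s(u)| ^ α`, where `v` is one of the
coordinates and `u` the other two. As `g ≤ C`, we have `g v / |t| ^ α ≤ C k(t) + g v` with
`k = 1_{[-1,1]} |·| ^ (-α)` integrable on `ℝ` (this is where `α < 1` enters), and integrating
in `v` first makes each term integrable.
-/

open MeasureTheory Set Real

section
variable {α : ℝ}

lemma integrable_indicator_Icc_abs_rpow_neg (hα : α < 1) :
    Integrable ((Icc (-1 : ℝ) 1).indicator fun t => |t| ^ (-α)) := by
  have hloc : LocallyIntegrable (fun t : ℝ => |t| ^ (-α)) :=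
    locallyIntegrable_of_norm_le_rpow (μ := volume) (C := 1) (by simp) (by simpa using hα)
      (ae_of_all _ fun t => by simp [abs_of_nonneg (rpow_nonneg (abs_nonneg t) _)])
      (measurable_abs.pow_const _).aestronglyMeasurable
  exact (hloc.integrableOn_isCompact isCompact_Icc).integrable_indicator measurableSet_Icc

lemma div_abs_rpow_le_indicator_add {a C t : ℝ} (ha : 0 ≤ a) (haC : a ≤ C) (hα : 0 ≤ α) :
    a / |t| ^ α ≤ C * (Icc (-1 : ℝ) 1).indicator (fun t => |t| ^ (-α)) t + a := by
  by_cases ht : t ∈ Icc (-1 : ℝ) 1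
  · rw [indicator_of_mem ht, rpow_neg (abs_nonneg t), div_eq_mul_inv]
    have := mul_le_mul_of_nonneg_right haC (inv_nonneg.2 (rpow_nonneg (abs_nonneg t) α))
    linarith
  · rw [mem_Icc, ← abs_le, not_le] at ht
    rw [indicator_of_notMem (by rwa [mem_Icc, ← abs_le, not_le]), mul_zero, zero_add]
    exact div_le_self ha (one_le_rpow ht.le hα)

theorem integrable_mul_div_abs_sub_rpow {X : Type*} [MeasurableSpace X] {μ : Measure X}
    [SFinite μ] {g : ℝ → ℝ} (hg : Integrable g) (hg0 : ∀ v, 0 ≤ g v) {C : ℝ}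
    (hgC : ∀ v, g v ≤ C) (hα0 : 0 < α) (hα1 : α < 1) {G : X → ℝ} (hG : Integrable G μ)
    {s : X → ℝ} (hs : Measurable s) :
    Integrable (fun w : ℝ × X => g w.1 * G w.2 / |w.1 - s w.2| ^ α) (volume.prod μ) := by
  set k := (Icc (-1 : ℝ) 1).indicator fun t => |t| ^ (-α)
  have hk : Integrable k := integrable_indicator_Icc_abs_rpow_neg hα1
  have hshift : Integrable (fun w : ℝ × X => k (w.1 - s w.2) * ‖G w.2‖) (volume.prod μ) := by
    have hkm : Measurable k := (measurable_abs.pow_const _).indicator measurableSet_Icc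
    have hmeas : AEStronglyMeasurable (fun w : ℝ × X => k (w.1 - s w.2) * ‖G w.2‖)
        (volume.prod μ) :=
      (hkm.comp (measurable_fst.sub (hs.comp measurable_snd))).aestronglyMeasurable.mul
        hG.1.norm.comp_snd
    rw [integrable_prod_iff' hmeas]
    refine ⟨ae_of_all _ fun u => (hk.comp_sub_right (s u)).mul_const ‖G u‖, ?_⟩
    simp_rw [norm_mul, norm_norm, integral_mul_const,
      integral_sub_right_eq_self (μ := volume) (fun x => ‖k x‖)]
    exact hG.norm.const_mul _
  refine ((hshift.const_mul C).add (hg.mul_prod hG.norm)).mono'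
    ((hg.1.comp_fst.mul hG.1.comp_snd).div₀
      ((measurable_fst.sub (hs.comp measurable_snd)).abs.pow_const α).aestronglyMeasurable)
    (ae_of_all _ fun w => ?_)
  have hD : 0 ≤ |w.1 - s w.2| ^ α := rpow_nonneg (abs_nonneg _) α
  calc ‖g w.1 * G w.2 / |w.1 - s w.2| ^ α‖ = g w.1 / |w.1 - s w.2| ^ α * ‖G w.2‖ := by
        rw [norm_div, norm_mul, Real.norm_of_nonneg (hg0 _), Real.norm_of_nonneg hD]; ring
    _ ≤ (C * k (w.1 - s w.2) + g w.1) * ‖G w.2‖ :=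
        mul_le_mul_of_nonneg_right (div_abs_rpow_le_indicator_add (hg0 _) (hgC _) hα0.le)
          (norm_nonneg _)
    _ = C * (k (w.1 - s w.2) * ‖G w.2‖) + g w.1 * ‖G w.2‖ := by ring

end

lemma mul_le_sum_pow_four {a b c d : ℝ} (ha : 0 ≤ a) (hb : 0 ≤ b) (hc : 0 ≤ c) (hd : 0 ≤ d) :
    a * b * c * d ≤ a ^ 4 + b ^ 4 + c ^ 4 + d ^ 4 := by
  nlinarith [sq_nonneg (a * b - c * d), sq_nonneg (a ^ 2 - b ^ 2), sq_nonneg (c ^ 2 - d ^ 2),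
    mul_nonneg (mul_nonneg ha hb) (mul_nonneg hc hd)]

lemma div_abs_mul_rpow_le {N : ℝ} (hN : 0 ≤ N) (β a b c d : ℝ) :
    N / |a * b * c * d| ^ β ≤
      N / |a| ^ (4 * β) + N / |b| ^ (4 * β) + N / |c| ^ (4 * β) + N / |d| ^ (4 * β) := by
  have hpow : ∀ x : ℝ, (|x| ^ (4 * β))⁻¹ = ((|x| ^ β)⁻¹) ^ 4 := fun x => by
    rw [mul_comm, rpow_mul (abs_nonneg x), inv_pow, ← rpow_natCast]; norm_num
  have hsplit :
      (|a * b * c * d| ^ β)⁻¹ = (|a| ^ β)⁻¹ * (|b| ^ β)⁻¹ * (|c| ^ β)⁻¹ * (|d| ^ β)⁻¹ := by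
    rw [abs_mul, abs_mul, abs_mul, mul_rpow (by positivity) (abs_nonneg _),
      mul_rpow (by positivity) (abs_nonneg _), mul_rpow (abs_nonneg _) (abs_nonneg _)]
    simp only [mul_inv]
  simp only [div_eq_mul_inv, hsplit, hpow, ← mul_add]
  exact mul_le_mul_of_nonneg_left (mul_le_sum_pow_four (by positivity) (by positivity)
    (by positivity) (by positivity)) hN

lemma MeasureTheory.Integrable.rpow_of_le {E : Type*} [MeasurableSpace E] {μ : Measure E}
    {f : E → ℝ} (hf : Integrable f μ) (hf0 : ∀ x, 0 ≤ f x) {M : ℝ} (hfM : ∀ x, f x ≤ M) {p : ℝ}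
    (hp : 1 ≤ p) : Integrable (fun x => f x ^ p) μ := by
  refine (hf.const_mul (M ^ (p - 1))).mono' (hf.1.aemeasurable.pow_const p).aestronglyMeasurable
    (ae_of_all _ fun x => ?_)
  rw [Real.norm_of_nonneg (rpow_nonneg (hf0 x) p)]
  calc f x ^ p = f x ^ (p - 1) * f x := by
        rw [← rpow_add_one' (hf0 x) (by linarith), sub_add_cancel]
    _ ≤ M ^ (p - 1) * f x :=
        mul_le_mul_of_nonneg_right (rpow_le_rpow (hf0 x) (hfM x) (by linarith)) (hf0 x)

theorem density_condition_integrable_general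
    (f : ℝ → ℝ) (hf0 : ∀ x, 0 ≤ f x)
    (M : ℝ) (hbd : ∀ x, f x ≤ M)
    (hint : ∫ x, f x = 1)
    (p : ℝ) (hp1 : 1 < p) (hp2 : p < 5 / 4) :
    Integrable (fun q : ℝ × ℝ × ℝ =>
        f q.1 ^ p * f q.2.1 ^ p * f q.2.2 ^ p /
          |(q.1 + q.2.1 + q.2.2) * (q.1 - q.2.1) * (q.2.1 - q.2.2) * (q.2.2 - q.1)| ^ (p - 1))
      (volume : Measure (ℝ × ℝ × ℝ)) := by
  have hf : Integrable f := Integrable.of_integral_ne_zero (by rw [hint]; exact one_ne_zero)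
  have hg : Integrable fun x => f x ^ p := hf.rpow_of_le hf0 hbd hp1.le
  have hg0 : ∀ x, 0 ≤ f x ^ p := fun x => rpow_nonneg (hf0 x) p
  have hgM : ∀ x, f x ^ p ≤ M ^ p := fun x => rpow_le_rpow (hf0 x) (hbd x) (by linarith)
  have hα₀ : 0 < 4 * (p - 1) := by linarith
  have hα₁ : 4 * (p - 1) < 1 := by linarith
  have hgg := hg.mul_prod hg
  have h₁ := integrable_mul_div_abs_sub_rpow hg hg0 hgM hα₀ hα₁ hgg
    (s := fun u => -u.1 - u.2) (by fun_prop)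
  have h₂ := integrable_mul_div_abs_sub_rpow hg hg0 hgM hα₀ hα₁ hgg (s := Prod.fst) measurable_fst
  have h₃ := hg.mul_prod (integrable_mul_div_abs_sub_rpow hg hg0 hgM hα₀ hα₁ hg measurable_id)
  have h₄ := integrable_mul_div_abs_sub_rpow hg hg0 hgM hα₀ hα₁ hgg (s := Prod.snd) measurable_snd
  have hden : Measurable fun q : ℝ × ℝ × ℝ =>
      |(q.1 + q.2.1 + q.2.2) * (q.1 - q.2.1) * (q.2.1 - q.2.2) * (q.2.2 - q.1)| ^ (p - 1) := by
    fun_prop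
  refine (((h₁.add h₂).add h₃).add h₄).mono' ?_ (ae_of_all _ fun ⟨x, y, z⟩ => ?_)
  · exact ((hg.1.comp_fst.mul hg.1.comp_fst.comp_snd).mul hg.1.comp_snd.comp_snd).div₀
      hden.aestronglyMeasurable
  have hN := mul_nonneg (mul_nonneg (hg0 x) (hg0 y)) (hg0 z)
  rw [Real.norm_of_nonneg (div_nonneg hN (rpow_nonneg (abs_nonneg _) _))]
  simp only [Pi.add_apply, id, show x - (-y - z) = x + y + z by ring, abs_sub_comm x z]
  refine (div_abs_mul_rpow_le hN (p - 1) (x + y + z) (x - y) (y - z) (z - x)).trans_eq ?_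
  ring

theorem density_condition_integrable
    (f : ℝ → ℝ) (hf0 : ∀ x, 0 ≤ f x) (hmeas : Measurable f)
    (M : ℝ) (hbd : ∀ x, f x ≤ M)
    (hint : ∫ x, f x = 1)
    (p : ℝ) (hp1 : 1 < p) (hp2 : p < 5 / 4) :
    Integrable (fun q : ℝ × ℝ × ℝ =>
        f q.1 ^ p * f q.2.1 ^ p * f q.2.2 ^ p /
          |(q.1 + q.2.1 + q.2.2) * (q.1 - q.2.1) * (q.2.1 - q.2.2) * (q.2.2 - q.1)| ^ (p - 1))
      (volume : Measure (ℝ × ℝ × ℝ)) :=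
  density_condition_integrable_general f hf0 M hbd hint p hp1 hp2
end
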